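/- Let r > 0 and let u, v : ℝ → ℝ be twice differentiable with u(t) > 0 and (u̇, v̇) ≠ (0,0) for all t. For γ(t) = ψ(u(t), v(t)), let n(t) = (1/‖γ̇‖)·(−v̇ cosh(u/r)·ψ_u + (u̇/cosh(u/r))·ψ_v) be the unit normal, where ψ_u = (sinh(u/r)cosh(v/r), sinh(u/r)sinh(v/r), cosh(u/r)) and ψ_v = (cosh(u/r)sinh(v/r), cosh(u/r)cosh(v/r), 0). Then γ is an extrinsic catenary of elliptic type (satisfies the Euler–Lagrange equations with f(u,v) = sinh(u/r)) if and only if its geodesic curvature κ in H²(r) satisfies κ(t) = −⟨n(t), (0,0,1)⟩₁ / (r sinh(u(t)/r)) for all t; here (0,0,1) is the Killing vector field of translations along the geodesics of E₁³ joining γ to the Lorentzian plane spanned by e_x and e_y, and r sinh(u/r) is the distance from γ(t) to that plane. -/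

import Mathlib

/-! Write `c = cosh (u/r)`, `w = ‖γ̇‖` and, for a weight `f(u)` depending on `u` only,
`X = f(u) κ w - f'(u) c v̇`. Once the momenta `f u̇ / w`, `f c² v̇ / w` are differentiated and
`κ` is written in semi-geodesic coordinates, the two Euler–Lagrange residuals are
`-(c/w) v̇ X` and `(c/w) u̇ X`, so for a regular curve the system is the single equation
`X = 0`. For `f = sinh (·/r)` this is the Killing-field equation, because
`⟨n, e_z⟩₁ = -v̇ c² / w`. -/

noncomputable section
open Real

/-- Minkowski inner product of `E₁³`. -/
def mink3 (X Y : ℝ × ℝ × ℝ) : ℝ := -(X.1 * Y.1) + X.2.1 * Y.2.1 + X.2.2 * Y.2.2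

/-- Speed `‖γ̇‖ = √(−ẋ² + ẏ² + ż²)` of a curve `(x,y,z)` in `E₁³`. -/
def speed3 (x y z : ℝ → ℝ) (t : ℝ) : ℝ :=
  Real.sqrt (-(deriv x t) ^ 2 + (deriv y t) ^ 2 + (deriv z t) ^ 2)

/-- Geodesic curvature of the curve `(x,y,z)` in `H²(r)`. -/
def kappaH2 (r : ℝ) (x y z : ℝ → ℝ) (t : ℝ) : ℝ :=
  -(x t * (deriv (deriv y) t * deriv z t - deriv y t * deriv (deriv z) t)
      - y t * (deriv (deriv x) t * deriv z t - deriv x t * deriv (deriv z) t)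
      + z t * (deriv (deriv x) t * deriv y t - deriv x t * deriv (deriv y) t))
    / (r * (speed3 x y z t) ^ 3)

/-- First component of `γ(t) = ψ(u(t), v(t))` (semi-geodesic parametrization). -/
def gX (r : ℝ) (u v : ℝ → ℝ) (t : ℝ) : ℝ :=
  r * Real.cosh (u t / r) * Real.cosh (v t / r)

/-- Second component of `γ(t) = ψ(u(t), v(t))`. -/
def gY (r : ℝ) (u v : ℝ → ℝ) (t : ℝ) : ℝ :=
  r * Real.cosh (u t / r) * Real.sinh (v t / r)

/-- Third component of `γ(t) = ψ(u(t), v(t))`. -/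
def gZ (r : ℝ) (u v : ℝ → ℝ) (t : ℝ) : ℝ :=
  r * Real.sinh (u t / r)

/-- `‖γ̇‖` in semi-geodesic coordinates: `√(u̇² + cosh²(u/r) v̇²)`. -/
def speedSG (r : ℝ) (u v : ℝ → ℝ) (t : ℝ) : ℝ :=
  Real.sqrt ((deriv u t) ^ 2 + (Real.cosh (u t / r)) ^ 2 * (deriv v t) ^ 2)

/-- Geodesic curvature of `γ(t) = ψ(u(t), v(t))` in `H²(r)`. -/
def kappaSG (r : ℝ) (u v : ℝ → ℝ) (t : ℝ) : ℝ :=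
  kappaH2 r (gX r u v) (gY r u v) (gZ r u v) t

/-- The Euler–Lagrange equations of the functional `∫ f(u,v) ‖γ̇‖ dt` in
semi-geodesic coordinates. -/
def EulerLagrange (r : ℝ) (f : ℝ → ℝ → ℝ) (u v : ℝ → ℝ) : Prop :=
  ∀ t : ℝ,
    deriv (fun a => f a (v t)) (u t) * speedSG r u v t
        + f (u t) (v t) * Real.sinh (u t / r) * Real.cosh (u t / r) * (deriv v t) ^ 2
          / (r * speedSG r u v t)
      = deriv (fun s => f (u s) (v s) * deriv u s / speedSG r u v s) t
    ∧ deriv (fun b => f (u t) b) (v t) * speedSG r u v t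
      = deriv (fun s =>
          f (u s) (v s) * deriv v s * (Real.cosh (u s / r)) ^ 2 / speedSG r u v s) t

/-- `ψ_u(u,v)`. -/
def psiU (r a b : ℝ) : ℝ × ℝ × ℝ :=
  (Real.sinh (a / r) * Real.cosh (b / r), Real.sinh (a / r) * Real.sinh (b / r),
    Real.cosh (a / r))

/-- `ψ_v(u,v)`. -/
def psiV (r a b : ℝ) : ℝ × ℝ × ℝ :=
  (Real.cosh (a / r) * Real.sinh (b / r), Real.cosh (a / r) * Real.cosh (b / r), 0)

/-- Unit normal of `γ(t) = ψ(u(t), v(t))` in `H²(r)`: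
`n = (1/‖γ̇‖)(−v̇ cosh(u/r) ψ_u + (u̇ / cosh(u/r)) ψ_v)`. -/
def unitNormal (r : ℝ) (u v : ℝ → ℝ) (t : ℝ) : ℝ × ℝ × ℝ :=
  (speedSG r u v t)⁻¹ •
    ((-(deriv v t * Real.cosh (u t / r))) • psiU r (u t) (v t)
      + (deriv u t / Real.cosh (u t / r)) • psiV r (u t) (v t))

section SemiGeodesic

variable {r t : ℝ} {u v : ℝ → ℝ}

lemma hasDerivAt_cosh_comp_div (hu : DifferentiableAt ℝ u t) :
    HasDerivAt (fun τ => cosh (u τ / r)) (sinh (u t / r) * (deriv u t / r)) t :=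
  (hu.hasDerivAt.div_const r).cosh

lemma hasDerivAt_sinh_comp_div (hu : DifferentiableAt ℝ u t) :
    HasDerivAt (fun τ => sinh (u τ / r)) (cosh (u t / r) * (deriv u t / r)) t :=
  (hu.hasDerivAt.div_const r).sinh

lemma deriv_gX (hr : r ≠ 0) (hu : Differentiable ℝ u) (hv : Differentiable ℝ v) :
    deriv (gX r u v) =
      fun τ => sinh (u τ / r) * cosh (v τ / r) * deriv u τ
        + cosh (u τ / r) * sinh (v τ / r) * deriv v τ := by
  ext τ
  refine ((((hasDerivAt_cosh_comp_div (hu τ)).const_mul r).mul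
    (hasDerivAt_cosh_comp_div (hv τ))).congr_deriv ?_).deriv
  field_simp

lemma deriv_gY (hr : r ≠ 0) (hu : Differentiable ℝ u) (hv : Differentiable ℝ v) :
    deriv (gY r u v) =
      fun τ => sinh (u τ / r) * sinh (v τ / r) * deriv u τ
        + cosh (u τ / r) * cosh (v τ / r) * deriv v τ := by
  ext τ
  refine ((((hasDerivAt_cosh_comp_div (hu τ)).const_mul r).mul
    (hasDerivAt_sinh_comp_div (hv τ))).congr_deriv ?_).deriv
  field_simp

lemma deriv_gZ (hr : r ≠ 0) (hu : Differentiable ℝ u) :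
    deriv (gZ r u v) = fun τ => cosh (u τ / r) * deriv u τ := by
  ext τ
  refine (((hasDerivAt_sinh_comp_div (hu τ)).const_mul r).congr_deriv ?_).deriv
  field_simp

lemma deriv_deriv_gX (hr : r ≠ 0) (hu : Differentiable ℝ u) (hu2 : Differentiable ℝ (deriv u))
    (hv : Differentiable ℝ v) (hv2 : Differentiable ℝ (deriv v)) :
    deriv (deriv (gX r u v)) t =
      (cosh (u t / r) * cosh (v t / r) * (deriv u t ^ 2 + deriv v t ^ 2)
          + 2 * sinh (u t / r) * sinh (v t / r) * deriv u t * deriv v t) / r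
        + sinh (u t / r) * cosh (v t / r) * deriv (deriv u) t
        + cosh (u t / r) * sinh (v t / r) * deriv (deriv v) t := by
  rw [deriv_gX hr hu hv]
  refine (((((hasDerivAt_sinh_comp_div (hu t)).mul (hasDerivAt_cosh_comp_div (hv t))).mul
    (hu2 t).hasDerivAt).add (((hasDerivAt_cosh_comp_div (hu t)).mul
    (hasDerivAt_sinh_comp_div (hv t))).mul (hv2 t).hasDerivAt)).congr_deriv ?_).deriv
  simp only [Pi.mul_apply]
  field_simp
  ring

lemma deriv_deriv_gY (hr : r ≠ 0) (hu : Differentiable ℝ u) (hu2 : Differentiable ℝ (deriv u))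
    (hv : Differentiable ℝ v) (hv2 : Differentiable ℝ (deriv v)) :
    deriv (deriv (gY r u v)) t =
      (cosh (u t / r) * sinh (v t / r) * (deriv u t ^ 2 + deriv v t ^ 2)
          + 2 * sinh (u t / r) * cosh (v t / r) * deriv u t * deriv v t) / r
        + sinh (u t / r) * sinh (v t / r) * deriv (deriv u) t
        + cosh (u t / r) * cosh (v t / r) * deriv (deriv v) t := by
  rw [deriv_gY hr hu hv]
  refine (((((hasDerivAt_sinh_comp_div (hu t)).mul (hasDerivAt_sinh_comp_div (hv t))).mul
    (hu2 t).hasDerivAt).add (((hasDerivAt_cosh_comp_div (hu t)).mul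
    (hasDerivAt_cosh_comp_div (hv t))).mul (hv2 t).hasDerivAt)).congr_deriv ?_).deriv
  simp only [Pi.mul_apply]
  field_simp
  ring

lemma deriv_deriv_gZ (hr : r ≠ 0) (hu : Differentiable ℝ u)
    (hu2 : Differentiable ℝ (deriv u)) :
    deriv (deriv (gZ r u v)) t =
      sinh (u t / r) * deriv u t ^ 2 / r + cosh (u t / r) * deriv (deriv u) t := by
  rw [deriv_gZ hr hu]
  refine (((hasDerivAt_cosh_comp_div (hu t)).mul (hu2 t).hasDerivAt).congr_deriv ?_).deriv
  field_simp

lemma speed3_eq_speedSG (hr : r ≠ 0) (hu : Differentiable ℝ u) (hv : Differentiable ℝ v) :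
    speed3 (gX r u v) (gY r u v) (gZ r u v) t = speedSG r u v t := by
  rw [speed3, speedSG, deriv_gX hr hu hv, deriv_gY hr hu hv, deriv_gZ hr hu]
  congr 1
  linear_combination
    (cosh (u t / r) ^ 2 * deriv v t ^ 2 - sinh (u t / r) ^ 2 * deriv u t ^ 2)
      * cosh_sq_sub_sinh_sq (v t / r) + deriv u t ^ 2 * cosh_sq_sub_sinh_sq (u t / r)

lemma kappaSG_eq (hr : r ≠ 0) (hu : Differentiable ℝ u) (hu2 : Differentiable ℝ (deriv u))
    (hv : Differentiable ℝ v) (hv2 : Differentiable ℝ (deriv v)) :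
    kappaSG r u v t =
      -(sinh (u t / r) * deriv v t * (2 * deriv u t ^ 2 + cosh (u t / r) ^ 2 * deriv v t ^ 2)
          + r * cosh (u t / r) * (deriv u t * deriv (deriv v) t - deriv v t * deriv (deriv u) t))
        / (r * speedSG r u v t ^ 3) := by
  rw [kappaSG, kappaH2, speed3_eq_speedSG hr hu hv, deriv_deriv_gX hr hu hu2 hv hv2,
    deriv_deriv_gY hr hu hu2 hv hv2, deriv_deriv_gZ hr hu hu2, deriv_gX hr hu hv,
    deriv_gY hr hu hv, deriv_gZ hr hu]
  congr 2
  simp only [gX, gY, gZ]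
  field_simp
  set c := cosh (u t / r)
  set s := sinh (u t / r)
  set p := deriv u t
  set q := deriv v t
  -- the numerator is the determinant of `(γ, γ'', γ')`, computed in the frame
  -- `(cosh (v/r), sinh (v/r), 0)`, `(sinh (v/r), cosh (v/r), 0)`, `(0, 0, 1)` of determinant `1`
  linear_combination
    (c * ((2 * s * p * q + r * c * deriv (deriv v) t) * c * p
        - (s * p ^ 2 + r * c * deriv (deriv u) t) * c * q)
      + s * ((c * (p ^ 2 + q ^ 2) + r * s * deriv (deriv u) t) * c * q
        - (2 * s * p * q + r * c * deriv (deriv v) t) * s * p)) * cosh_sq_sub_sinh_sq (v t / r)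
    + (p * (2 * s * p * q + r * c * deriv (deriv v) t) - r * c * q * deriv (deriv u) t)
      * cosh_sq_sub_sinh_sq (u t / r)

lemma sq_speedSG : speedSG r u v t ^ 2 = deriv u t ^ 2 + cosh (u t / r) ^ 2 * deriv v t ^ 2 :=
  sq_sqrt (by positivity)

lemma speedSG_pos (hreg : (deriv u t, deriv v t) ≠ (0, 0)) : 0 < speedSG r u v t := by
  refine sqrt_pos.mpr ?_
  rcases ne_or_eq (deriv u t) 0 with hp | hp
  · positivity
  · have hq : deriv v t ≠ 0 := fun hq => hreg (by rw [hp, hq])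
    positivity

lemma hasDerivAt_speedSG (hu : DifferentiableAt ℝ u t) (hu2 : DifferentiableAt ℝ (deriv u) t)
    (hv2 : DifferentiableAt ℝ (deriv v) t) (hreg : (deriv u t, deriv v t) ≠ (0, 0)) :
    HasDerivAt (speedSG r u v)
      ((deriv u t * deriv (deriv u) t
          + sinh (u t / r) * cosh (u t / r) * deriv u t * deriv v t ^ 2 / r
          + cosh (u t / r) ^ 2 * deriv v t * deriv (deriv v) t) / speedSG r u v t) t := by
  have hw := (speedSG_pos (r := r) hreg).ne'
  have harg : deriv u t ^ 2 + cosh (u t / r) ^ 2 * deriv v t ^ 2 ≠ 0 := by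
    rw [← sq_speedSG]; exact pow_ne_zero 2 hw
  refine (((hu2.hasDerivAt.pow 2).add (((hasDerivAt_cosh_comp_div hu).pow 2).mul
    (hv2.hasDerivAt.pow 2))).sqrt harg).congr_deriv ?_
  simp only [Pi.mul_apply, Pi.add_apply, Pi.pow_apply]
  rw [← speedSG]
  field_simp
  ring

lemma hasDerivAt_div_speedSG {g : ℝ → ℝ} {g' : ℝ} (hg : HasDerivAt g g' t)
    (hu : DifferentiableAt ℝ u t) (hu2 : DifferentiableAt ℝ (deriv u) t)
    (hv2 : DifferentiableAt ℝ (deriv v) t) (hreg : (deriv u t, deriv v t) ≠ (0, 0)) :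
    HasDerivAt (fun τ => g τ / speedSG r u v τ)
      ((g' * speedSG r u v t ^ 2 - g t * (deriv u t * deriv (deriv u) t
          + sinh (u t / r) * cosh (u t / r) * deriv u t * deriv v t ^ 2 / r
          + cosh (u t / r) ^ 2 * deriv v t * deriv (deriv v) t)) / speedSG r u v t ^ 3) t := by
  have hw := (speedSG_pos (r := r) hreg).ne'
  refine (hg.div (hasDerivAt_speedSG hu hu2 hv2 hreg) hw).congr_deriv ?_
  field_simp

lemma and_mul_eq_zero_iff {M₀ : Type*} [MulZeroClass M₀] [NoZeroDivisors M₀] {a b e : M₀}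
    (hab : (a, b) ≠ (0, 0)) : a * e = 0 ∧ b * e = 0 ↔ e = 0 := by
  refine ⟨fun ⟨ha, hb⟩ => ?_, fun he => by simp [he]⟩
  by_contra he
  exact hab (by simp [(mul_eq_zero.mp ha).resolve_right he, (mul_eq_zero.mp hb).resolve_right he])

lemma eq_iff_eq_zero_of_sub_eq_mul {R : Type*} [Ring R] [NoZeroDivisors R] {a b k x : R}
    (hk : k ≠ 0) (h : a - b = k * x) : a = b ↔ x = 0 := by
  rw [← sub_eq_zero, h, mul_eq_zero, or_iff_right hk]

lemma eulerLagrange_iff_forall_mul {f : ℝ → ℝ} (hf : Differentiable ℝ f) (hr : r ≠ 0)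
    (hu : Differentiable ℝ u) (hu2 : Differentiable ℝ (deriv u))
    (hv : Differentiable ℝ v) (hv2 : Differentiable ℝ (deriv v))
    (hreg : ∀ t, (deriv u t, deriv v t) ≠ (0, 0)) :
    EulerLagrange r (fun a _ => f a) u v ↔ ∀ t,
      deriv v t * (f (u t) * kappaSG r u v t * speedSG r u v t
          - deriv f (u t) * cosh (u t / r) * deriv v t) = 0 ∧
      deriv u t * (f (u t) * kappaSG r u v t * speedSG r u v t
          - deriv f (u t) * cosh (u t / r) * deriv v t) = 0 := by
  refine forall_congr' fun t => ?_
  have hw := (speedSG_pos (r := r) (hreg t)).ne'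
  have hc := (cosh_pos (u t / r)).ne'
  have hfu : HasDerivAt (fun τ => f (u τ)) (deriv f (u t) * deriv u t) t :=
    (hf (u t)).hasDerivAt.comp t (hu t).hasDerivAt
  have hmom_u := (hasDerivAt_div_speedSG (r := r) (g := fun τ => f (u τ) * deriv u τ)
    (hfu.mul (hu2 t).hasDerivAt) (hu t) (hu2 t) (hv2 t) (hreg t)).deriv
  have hmom_v := (hasDerivAt_div_speedSG (r := r)
    (g := fun τ => f (u τ) * deriv v τ * cosh (u τ / r) ^ 2) ((hfu.mul (hv2 t).hasDerivAt).mul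
    ((hasDerivAt_cosh_comp_div (hu t)).pow 2)) (hu t) (hu2 t) (hv2 t) (hreg t)).deriv
  simp only [deriv_const, zero_mul]
  rw [hmom_u, hmom_v, kappaSG_eq hr hu hu2 hv hv2]
  have hW := sq_speedSG (r := r) (u := u) (v := v) (t := t)
  refine and_congr (eq_iff_eq_zero_of_sub_eq_mul (k := -(cosh (u t / r) / speedSG r u v t))
    (by simp [hc, hw]) ?_) (eq_iff_eq_zero_of_sub_eq_mul (k := cosh (u t / r) / speedSG r u v t)
    (by simp [hc, hw]) ?_)
  · field_simp
    linear_combination (r * deriv f (u t) * speedSG r u v t ^ 2 - r * f (u t) * deriv (deriv u) t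
      + f (u t) * sinh (u t / r) * cosh (u t / r) * deriv v t ^ 2) * hW
  · simp only [Pi.pow_apply, Pi.mul_apply]
    field_simp
    linear_combination -(r * f (u t) * deriv (deriv v) t * cosh (u t / r) ^ 2
      + 2 * deriv u t * deriv v t * f (u t) * cosh (u t / r) * sinh (u t / r)) * hW

lemma eulerLagrange_iff_forall_kappaSG {f : ℝ → ℝ} (hf : Differentiable ℝ f) (hr : r ≠ 0)
    (hu : Differentiable ℝ u) (hu2 : Differentiable ℝ (deriv u))
    (hv : Differentiable ℝ v) (hv2 : Differentiable ℝ (deriv v))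
    (hreg : ∀ t, (deriv u t, deriv v t) ≠ (0, 0)) :
    EulerLagrange r (fun a _ => f a) u v ↔ ∀ t,
      f (u t) * kappaSG r u v t * speedSG r u v t = deriv f (u t) * cosh (u t / r) * deriv v t := by
  rw [eulerLagrange_iff_forall_mul hf hr hu hu2 hv hv2 hreg]
  exact forall_congr' fun t => by rw [and_comm, and_mul_eq_zero_iff (hreg t), sub_eq_zero]

lemma mink3_unitNormal_ez :
    mink3 (unitNormal r u v t) (0, 0, 1) = -(deriv v t * cosh (u t / r) ^ 2) / speedSG r u v t := by
  simp only [unitNormal, psiU, psiV, mink3, Prod.smul_mk, Prod.mk_add_mk, smul_eq_mul]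
  ring

end SemiGeodesic

/-- Killing field characterization of extrinsic catenaries of
elliptic type: `κ = −⟨n, e_z⟩₁ / (r sinh(u/r))`. -/
theorem extrinsic_catenary_elliptic_iff_killing (r : ℝ) (hr : 0 < r) (u v : ℝ → ℝ)
    (hupos : ∀ t : ℝ, 0 < u t)
    (hu : Differentiable ℝ u) (hu2 : Differentiable ℝ (deriv u))
    (hv : Differentiable ℝ v) (hv2 : Differentiable ℝ (deriv v))
    (hreg : ∀ t : ℝ, (deriv u t, deriv v t) ≠ (0, 0)) :
    EulerLagrange r (fun a _ => Real.sinh (a / r)) u v ↔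
      ∀ t : ℝ,
        kappaSG r u v t
          = -(mink3 (unitNormal r u v t) ((0, 0, 1) : ℝ × ℝ × ℝ))
            / (r * Real.sinh (u t / r)) := by
  rw [eulerLagrange_iff_forall_kappaSG (by fun_prop) hr.ne' hu hu2 hv hv2 hreg]
  refine forall_congr' fun t => ?_
  have hs : 0 < sinh (u t / r) := sinh_pos_iff.mpr (div_pos (hupos t) hr)
  have hw := speedSG_pos (r := r) (hreg t)
  have hsinh : deriv (fun a => sinh (a / r)) (u t) = cosh (u t / r) / r :=
    (((hasDerivAt_id (u t)).div_const r).sinh.congr_deriv (by simp [div_eq_mul_inv])).deriv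
  rw [hsinh, mink3_unitNormal_ez, eq_div_iff (by positivity)]
  field_simp
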